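/- Let M be an L_a-structure, v ∈ M a certified element, and k ∈ ℕ such that M ⊨ m̄ ≠ v for all m < k. Then for every pure Δ₀-formula φ(x₀,…,x_i) and all n₀,…,n_i ≤ k: if ℕ ⊨ φ(n₀,…,n_i) then M ⊨ φ(n̄₀,…,n̄_i), and if ℕ ⊨ ¬φ(n₀,…,n_i) then M ⊨ ¬φ(n̄₀,…,n̄_i). -/

import Mathlib

open FirstOrder FirstOrder.Language

/-- Function symbols of the arithmetic language `L_a = {0, S, +, ×, ≤}`. -/
inductive AFunc : ℕ → Type
  | zero : AFunc 0
  | succ : AFunc 1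
  | add : AFunc 2
  | mul : AFunc 2

/-- Relation symbols of `L_a`: the single binary relation `≤`. -/
inductive ARel : ℕ → Type
  | le : ARel 2

/-- The first-order language of arithmetic `L_a = {0, S, +, ×, ≤}`. -/
def La : Language := ⟨AFunc, ARel⟩

/-- The standard model ℕ as an `La`-structure. -/
instance : La.Structure ℕ where
  funMap := fun {n} f => match f with
    | .zero => fun _ => 0
    | .succ => fun v => v 0 + 1
    | .add => fun v => v 0 + v 1
    | .mul => fun v => v 0 * v 1
  RelMap := fun {n} r => match r with
    | .le => fun v => v 0 ≤ v 1

/-- The term `0`. -/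
def zeroT {β : Type} : La.Term β := Term.func AFunc.zero ![]
/-- The term `S t`. -/
def succT {β : Type} (t : La.Term β) : La.Term β := Term.func AFunc.succ ![t]
/-- The term `t + u`. -/
def addT {β : Type} (t u : La.Term β) : La.Term β := Term.func AFunc.add ![t, u]
/-- The term `t × u`. -/
def mulT {β : Type} (t u : La.Term β) : La.Term β := Term.func AFunc.mul ![t, u]

/-- The numeral `S…S0`. -/
def num {β : Type} : ℕ → La.Term β
  | 0 => zeroT
  | n + 1 => succT (num n)

/-- The atomic formula `t ≤ u`. -/
def leF {α : Type} {n : ℕ} (t u : La.Term (α ⊕ Fin n)) : La.BoundedFormula α n :=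
  Relations.boundedFormula ARel.le ![t, u]

/-- The formula `t < u`, i.e. `t ≤ u ∧ t ≠ u`. -/
def ltF {α : Type} {n : ℕ} (t u : La.Term (α ⊕ Fin n)) : La.BoundedFormula α n :=
  leF t u ⊓ ∼(t =' u)

/-- Lift a term of context `n` to context `n+1`. -/
def liftT {α : Type} {n : ℕ} (t : La.Term (α ⊕ Fin n)) : La.Term (α ⊕ Fin (n + 1)) :=
  t.relabel (Sum.map id Fin.castSucc)

/-- The de Bruijn variable `i` as a term. -/
def vr {α : Type} {n : ℕ} (i : Fin n) : La.Term (α ⊕ Fin n) := Term.var (Sum.inr i)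

/-- Δ₀-formulas of `L_a`: built from atomic formulas by Boolean connectives and
bounded quantifiers `∀ y ≤ t`, `∃ y ≤ t`. -/
inductive IsDelta0 : ∀ {α : Type} {n : ℕ}, La.BoundedFormula α n → Prop
  | falsum {α : Type} {n : ℕ} : IsDelta0 (⊥ : La.BoundedFormula α n)
  | equal {α : Type} {n : ℕ} (t u : La.Term (α ⊕ Fin n)) : IsDelta0 (t =' u)
  | le {α : Type} {n : ℕ} (t u : La.Term (α ⊕ Fin n)) : IsDelta0 (leF t u)
  | imp {α : Type} {n : ℕ} {φ ψ : La.BoundedFormula α n} :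
      IsDelta0 φ → IsDelta0 ψ → IsDelta0 (φ ⟹ ψ)
  | ball {α : Type} {n : ℕ} (t : La.Term (α ⊕ Fin n)) {φ : La.BoundedFormula α (n + 1)} :
      IsDelta0 φ →
      IsDelta0 (∀' (leF (Term.var (Sum.inr (Fin.last n))) (liftT t) ⟹ φ))
  | bex {α : Type} {n : ℕ} (t : La.Term (α ⊕ Fin n)) {φ : La.BoundedFormula α (n + 1)} :
      IsDelta0 φ →
      IsDelta0 (∃' (leF (Term.var (Sum.inr (Fin.last n))) (liftT t) ⊓ φ))

/-- A Σ₁-formula: an existential block (possibly empty) in front of a Δ₀-formula. -/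
def IsSigma1 {α : Type} (φ : La.Formula α) : Prop :=
  ∃ (m : ℕ) (δ : La.BoundedFormula α m), IsDelta0 δ ∧ φ = δ.exs

/-- Pure Δ₀-formulas: Δ₀-formulas in which the atomic subformulas are only
`x₀ = x₁`, `0 = x₀`, `S x₀ = x₁`, `x₀ + x₁ = x₂`, `x₀ × x₁ = x₂`, and `x₀ ≤ x₁`,
with all arguments variables, and the bounds of bounded quantifiers are variables. -/
inductive IsPureDelta0 : ∀ {α : Type} {n : ℕ}, La.BoundedFormula α n → Prop
  | eq {α : Type} {n : ℕ} (w₁ w₂ : α ⊕ Fin n) :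
      IsPureDelta0 ((Term.var w₁ : La.Term _) =' Term.var w₂)
  | zeroEq {α : Type} {n : ℕ} (w : α ⊕ Fin n) :
      IsPureDelta0 ((zeroT : La.Term _) =' Term.var w)
  | succEq {α : Type} {n : ℕ} (w₁ w₂ : α ⊕ Fin n) :
      IsPureDelta0 (succT (Term.var w₁) =' (Term.var w₂ : La.Term _))
  | addEq {α : Type} {n : ℕ} (w₁ w₂ w₃ : α ⊕ Fin n) :
      IsPureDelta0 (addT (Term.var w₁) (Term.var w₂) =' (Term.var w₃ : La.Term _))
  | mulEq {α : Type} {n : ℕ} (w₁ w₂ w₃ : α ⊕ Fin n) :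
      IsPureDelta0 (mulT (Term.var w₁) (Term.var w₂) =' (Term.var w₃ : La.Term _))
  | le {α : Type} {n : ℕ} (w₁ w₂ : α ⊕ Fin n) :
      IsPureDelta0 (leF (Term.var w₁) (Term.var w₂))
  | falsum {α : Type} {n : ℕ} : IsPureDelta0 (⊥ : La.BoundedFormula α n)
  | imp {α : Type} {n : ℕ} {φ ψ : La.BoundedFormula α n} :
      IsPureDelta0 φ → IsPureDelta0 ψ → IsPureDelta0 (φ ⟹ ψ)
  | ball {α : Type} {n : ℕ} (w : α ⊕ Fin n) {φ : La.BoundedFormula α (n + 1)} :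
      IsPureDelta0 φ →
      IsPureDelta0 (∀' (leF (Term.var (Sum.inr (Fin.last n))) (Term.var (Sum.map id Fin.castSucc w)) ⟹ φ))
  | bex {α : Type} {n : ℕ} (w : α ⊕ Fin n) {φ : La.BoundedFormula α (n + 1)} :
      IsPureDelta0 φ →
      IsPureDelta0 (∃' (leF (Term.var (Sum.inr (Fin.last n))) (Term.var (Sum.map id Fin.castSucc w)) ⊓ φ))

/-- A pure Σ₁-formula: an existential block (possibly empty) in front of a pure Δ₀-formula. -/
def IsPureSigma1 {α : Type} (φ : La.Formula α) : Prop :=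
  ∃ (m : ℕ) (δ : La.BoundedFormula α m), IsPureDelta0 δ ∧ φ = δ.exs

/-- A pure 1-Σ₁ sentence: `∃x σ₀(x)` with `σ₀` pure Δ₀ and a single existential quantifier. -/
def IsPure1Sigma1 (σ : La.Sentence) : Prop :=
  ∃ δ : La.BoundedFormula Empty 1, IsPureDelta0 δ ∧ σ = ∃' δ

section Semantics
open FirstOrder.Language.Structure

variable (M : Type) [La.Structure M]

/-- The interpretation of `0` in `M`. -/
def zM : M := funMap (L := La) AFunc.zero ![]
/-- The interpretation of successor in `M`. -/
def sM (x : M) : M := funMap (L := La) AFunc.succ ![x]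
/-- The interpretation of addition in `M`. -/
def addM (x y : M) : M := funMap (L := La) AFunc.add ![x, y]
/-- The interpretation of multiplication in `M`. -/
def mulM (x y : M) : M := funMap (L := La) AFunc.mul ![x, y]
/-- The interpretation of `≤` in `M`. -/
def leM (x y : M) : Prop := RelMap (L := La) ARel.le ![x, y]
/-- `x < y` in `M`: `x ≤ y ∧ x ≠ y`. -/
def ltM (x y : M) : Prop := leM M x y ∧ x ≠ y
/-- The interpretation of the numeral `m̄` in `M`. -/
def natM : ℕ → M
  | 0 => zM M
  | m + 1 => sM M (natM m)

/-- An element `v` of an `L_a`-structure is *certified* if it satisfies the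
certification axioms A1–A10. -/
structure Certified (v : M) : Prop where
  a1 : leM M (zM M) v
  a2 : ∀ x : M, ltM M x v → leM M (sM M x) v
  a3 : ∀ x : M, leM M x (zM M) ↔ x = zM M
  a4 : ∀ x : M, ltM M x v → ∀ y : M, leM M y (sM M x) ↔ (leM M y x ∨ y = sM M x)
  a5 : ∀ x y z : M, leM M x v → leM M y v → leM M z v →
    sM M (addM M (mulM M x y) z) ≠ zM M
  a6 : ∀ x y z w : M, leM M x v → leM M y v → leM M z v → leM M w v →
    sM M (addM M (mulM M x y) z) = sM M w → addM M (mulM M x y) z = w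
  a7 : ∀ x y : M, leM M x v → leM M y v → addM M (mulM M x y) (zM M) = mulM M x y
  a8 : ∀ x y z : M, leM M x v → leM M y v → leM M z v →
    addM M (mulM M x y) (sM M z) = sM M (addM M (mulM M x y) z)
  a9 : ∀ x : M, leM M x v → mulM M x (zM M) = zM M
  a10 : ∀ x y : M, leM M x v → leM M y v → mulM M x (sM M y) = addM M (mulM M x y) x

end Semantics

section Aux

open FirstOrder.Language.Structure

variable {M : Type} [La.Structure M]

/-- Evaluation of terms in ℕ. -/
lemma natM_nat : ∀ m : ℕ, natM ℕ m = m := by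
  intro m; induction m with
  | zero => rfl
  | succ n ih => show natM ℕ n + 1 = n + 1; rw [ih]

lemma fin0_eq (g : Fin 0 → M) : g = ![] := by
  funext i; exact i.elim0

lemma fin1_eq (g : Fin 1 → M) : g = ![g 0] := by
  funext i; fin_cases i <;> rfl

lemma fin2_eq (g : Fin 2 → M) : g = ![g 0, g 1] := by
  funext i; fin_cases i <;> rfl

lemma realize_zeroT {β : Type} (ρ : β → M) : (zeroT : La.Term β).realize ρ = zM M := by
  unfold zeroT zM
  refine (Term.realize_func (L := La) ..).trans ?_
  congr 1
  funext i
  exact i.elim0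

lemma realize_succT {β : Type} (t : La.Term β) (ρ : β → M) :
    (succT t).realize ρ = sM M (t.realize ρ) := by
  unfold succT sM
  refine (Term.realize_func (L := La) ..).trans ?_
  congr 1
  funext i
  fin_cases i <;> rfl

lemma realize_addT {β : Type} (t u : La.Term β) (ρ : β → M) :
    (addT t u).realize ρ = addM M (t.realize ρ) (u.realize ρ) := by
  unfold addT addM
  refine (Term.realize_func (L := La) ..).trans ?_
  congr 1
  funext i
  fin_cases i <;> rfl

lemma realize_mulT {β : Type} (t u : La.Term β) (ρ : β → M) :
    (mulT t u).realize ρ = mulM M (t.realize ρ) (u.realize ρ) := by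
  unfold mulT mulM
  refine (Term.realize_func (L := La) ..).trans ?_
  congr 1
  funext i
  fin_cases i <;> rfl

lemma realize_leF {α : Type} {n : ℕ} (t u : La.Term (α ⊕ Fin n)) (c : α → M) (xs : Fin n → M) :
    (leF t u).Realize c xs ↔
      leM M (t.realize (Sum.elim c xs)) (u.realize (Sum.elim c xs)) := by
  rw [leF]
  refine (BoundedFormula.realize_rel (L := La) ..).trans ?_
  unfold leM
  have h : (fun i => Term.realize (Sum.elim c xs) (![t, u] i)) =
      ![t.realize (Sum.elim c xs), u.realize (Sum.elim c xs)] := by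
    funext i
    fin_cases i <;> rfl
  rw [h]

variable {v : M} (hv : Certified M v) {k : ℕ} (hk : ∀ m : ℕ, m < k → natM M m ≠ v)

include hv hk

lemma nat_le_v : ∀ m, m ≤ k → leM M (natM M m) v := by
  intro m
  induction m with
  | zero => intro _; exact hv.a1
  | succ n ih =>
    intro h
    exact hv.a2 _ ⟨ih (Nat.le_of_lt (Nat.lt_of_succ_le h)), hk n (Nat.lt_of_succ_le h)⟩

lemma addProd (x y : M) (hx : leM M x v) (hy : leM M y v) (e : ℕ)
    (he : mulM M x y = natM M e) :
    ∀ d, d ≤ k → addM M (mulM M x y) (natM M d) = natM M (e + d) := by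
  intro d
  induction d with
  | zero => intro _; calc addM M (mulM M x y) (natM M 0) = mulM M x y := hv.a7 x y hx hy
              _ = natM M (e + 0) := he
  | succ d ih =>
    intro hd
    have h1 : addM M (mulM M x y) (sM M (natM M d)) = sM M (addM M (mulM M x y) (natM M d)) :=
      hv.a8 x y _ hx hy (nat_le_v hv hk d (Nat.le_of_succ_le hd))
    show addM M (mulM M x y) (sM M (natM M d)) = natM M (e + (d + 1))
    rw [h1, ih (Nat.le_of_succ_le hd)]
    rfl

lemma mulNum : ∀ a, a ≤ k → ∀ b, b ≤ k → mulM M (natM M a) (natM M b) = natM M (a * b) := by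
  intro a ha b
  induction b with
  | zero =>
    intro _
    show mulM M (natM M a) (zM M) = natM M (a * 0)
    rw [hv.a9 _ (nat_le_v hv hk a ha)]; rfl
  | succ b ih =>
    intro hb
    have hb' : b ≤ k := Nat.le_of_succ_le hb
    show mulM M (natM M a) (sM M (natM M b)) = natM M (a * (b + 1))
    rw [hv.a10 _ _ (nat_le_v hv hk a ha) (nat_le_v hv hk b hb')]
    have := addProd hv hk (natM M a) (natM M b) (nat_le_v hv hk a ha)
      (nat_le_v hv hk b hb') (a * b) (ih hb') a ha
    rw [this, Nat.mul_succ]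

lemma addNum : ∀ a, a ≤ k → ∀ b, b ≤ k → addM M (natM M a) (natM M b) = natM M (a + b) := by
  intro a ha b hb
  match a, ha with
  | 0, _ =>
    have h0 : mulM M (zM M) (zM M) = natM M 0 := hv.a9 _ hv.a1
    have := addProd hv hk (zM M) (zM M) hv.a1 hv.a1 0 h0 b hb
    rw [h0] at this
    show addM M (natM M 0) (natM M b) = natM M (0 + b)
    exact this
  | (a' + 1), ha =>
    have h1 : (1 : ℕ) ≤ k := Nat.le_trans (Nat.succ_le_succ (Nat.zero_le _)) ha
    have hm : mulM M (natM M (a' + 1)) (natM M 1) = natM M (a' + 1) := by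
      have := mulNum hv hk (a' + 1) ha 1 h1
      rwa [Nat.mul_one] at this
    have := addProd hv hk (natM M (a' + 1)) (natM M 1) (nat_le_v hv hk _ ha)
      (nat_le_v hv hk 1 h1) (a' + 1) hm b hb
    rwa [hm] at this

omit hv hk in
lemma decomp (m : ℕ) (h : m ≤ k * k + k) :
    ∃ x y z, x ≤ k ∧ y ≤ k ∧ z ≤ k ∧ x * y + z = m := by
  rcases le_or_gt m k with h1 | h1
  · exact ⟨0, 0, m, Nat.zero_le _, Nat.zero_le _, h1, by omega⟩
  · have hk0 : 0 < k := by
      rcases Nat.eq_zero_or_pos k with rfl | h'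
      · omega
      · exact h' 
    have h3 := Nat.div_add_mod m k
    have h5 : m % k < k := Nat.mod_lt _ hk0
    rcases le_or_gt (m / k) k with h2 | h2
    · exact ⟨k, m / k, m % k, Nat.le_refl _, h2, Nat.le_of_lt h5, by omega⟩
    · refine ⟨k, k, k, Nat.le_refl _, Nat.le_refl _, Nat.le_refl _, ?_⟩
      have h4 : k * (k + 1) ≤ k * (m / k) := Nat.mul_le_mul_left _ h2
      have h6 : k * (k + 1) = k * k + k := by ring
      omega

lemma existsRepr (m : ℕ) (h : m ≤ k * k + k) :
    ∃ x y z : M, leM M x v ∧ leM M y v ∧ leM M z v ∧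
      addM M (mulM M x y) z = natM M m := by
  obtain ⟨x, y, z, hx, hy, hz, hm⟩ := decomp (k := k) m h
  refine ⟨natM M x, natM M y, natM M z, nat_le_v hv hk x hx, nat_le_v hv hk y hy,
    nat_le_v hv hk z hz, ?_⟩
  have h1 := mulNum hv hk x hx y hy
  have h2 := addProd hv hk (natM M x) (natM M y) (nat_le_v hv hk x hx)
    (nat_le_v hv hk y hy) (x * y) h1 z hz
  rw [h2, hm]

lemma natInjBig : ∀ b, b ≤ k → ∀ a, a ≤ k * k + k + 1 → natM M a = natM M b → a = b := by
  intro b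
  induction b with
  | zero =>
    intro _ a ha heq
    match a, ha, heq with
    | 0, _, _ => rfl
    | (a' + 1), ha, heq =>
      exfalso
      obtain ⟨x, y, z, hx, hy, hz, hr⟩ := existsRepr hv hk a' (by omega)
      exact hv.a5 x y z hx hy hz (by rw [hr]; exact heq)
  | succ b ih =>
    intro hb a ha heq
    match a, ha, heq with
    | 0, _, heq =>
      exfalso
      obtain ⟨x, y, z, hx, hy, hz, hr⟩ := existsRepr hv hk b (by omega)
      exact hv.a5 x y z hx hy hz (by rw [hr]; exact heq.symm)
    | (a' + 1), ha, heq =>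
      have hb' : b ≤ k := Nat.le_of_succ_le hb
      obtain ⟨x, y, z, hx, hy, hz, hr⟩ := existsRepr hv hk a' (by omega)
      have h6 := hv.a6 x y z (natM M b) hx hy hz (nat_le_v hv hk b hb')
        (by rw [hr]; exact heq)
      rw [hr] at h6
      have := ih hb' a' (by omega) h6
      omega

lemma natInj : ∀ a, a ≤ k → ∀ b, b ≤ k → natM M a = natM M b → a = b := by
  intro a ha b hb heq
  exact natInjBig hv hk b hb a (by nlinarith) heq

lemma leChar : ∀ b, b ≤ k → ∀ x : M, leM M x (natM M b) ↔ ∃ a, a ≤ b ∧ x = natM M a := by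
  intro b
  induction b with
  | zero =>
    intro _ x
    rw [show natM M 0 = zM M from rfl, hv.a3 x]
    constructor
    · intro h; exact ⟨0, Nat.le_refl _, h⟩
    · rintro ⟨a, ha, rfl⟩
      have : a = 0 := Nat.le_zero.mp ha
      rw [this]
      rfl
  | succ b ih =>
    intro hb x
    have hb' : b < k := Nat.lt_of_succ_le hb
    have hlt : ltM M (natM M b) v := ⟨nat_le_v hv hk b (Nat.le_of_lt hb'), hk b hb'⟩
    rw [show natM M (b + 1) = sM M (natM M b) from rfl, hv.a4 _ hlt x,
      ih (Nat.le_of_lt hb') x]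
    constructor
    · rintro (⟨a, ha, rfl⟩ | rfl)
      · exact ⟨a, Nat.le_succ_of_le ha, rfl⟩
      · exact ⟨b + 1, Nat.le_refl _, rfl⟩
    · rintro ⟨a, ha, rfl⟩
      rcases Nat.lt_or_ge a (b + 1) with h | h
      · exact Or.inl ⟨a, Nat.lt_succ_iff.mp h, rfl⟩
      · have : a = b + 1 := Nat.le_antisymm ha h
        exact Or.inr (by rw [this]; rfl)

end Aux

section Main

variable {M : Type} [La.Structure M] {v : M} (hv : Certified M v) {k : ℕ}
  (hk : ∀ m : ℕ, m < k → natM M m ≠ v)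

lemma sumElim_nat {α : Type} {n : ℕ} (c : α → ℕ) (a : Fin n → ℕ) :
    Sum.elim (fun x => natM M (c x)) (fun i => natM M (a i)) =
      fun w => natM M (Sum.elim c a w) := by
  funext w; cases w <;> rfl

lemma snoc_nat {n : ℕ} (a : Fin n → ℕ) (m : ℕ) :
    (Fin.snoc (fun i => natM M (a i)) (natM M m) : Fin (n + 1) → M) =
      fun i => natM M ((Fin.snoc a m : Fin (n + 1) → ℕ) i) := by
  funext i
  refine Fin.lastCases ?_ (fun j => ?_) i
  · simp
  · simp

omit hv hk

lemma sumElim_snoc_map {β α : Type} {n : ℕ} (c : α → β) (a : Fin n → β) (x : β)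
    (w : α ⊕ Fin n) :
    Sum.elim c (Fin.snoc a x) (Sum.map id Fin.castSucc w) = Sum.elim c a w := by
  cases w with
  | inl => rfl
  | inr i => simp

lemma snoc_le {n : ℕ} (a : Fin n → ℕ) (ha : ∀ i, a i ≤ k) (m : ℕ) (hm : m ≤ k) :
    ∀ i : Fin (n + 1), (Fin.snoc a m : Fin (n + 1) → ℕ) i ≤ k := by
  intro i
  refine Fin.lastCases ?_ (fun j => ?_) i
  · simpa using hm
  · simpa using ha j

include hv hk

lemma pure_absolute : ∀ {α : Type} {n : ℕ} (φ : La.BoundedFormula α n), IsPureDelta0 φ →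
    ∀ (c : α → ℕ) (a : Fin n → ℕ), (∀ x, c x ≤ k) → (∀ i, a i ≤ k) →
      (φ.Realize c a → φ.Realize (fun x => natM M (c x)) (fun i => natM M (a i))) ∧
      (¬ φ.Realize c a → ¬ φ.Realize (fun x => natM M (c x)) (fun i => natM M (a i))) := by
  intro α n φ hφ
  induction hφ with
  | @eq n w₁ w₂ =>
    intro c a hc ha
    have hw : ∀ w, Sum.elim c a w ≤ k := by
      rintro (x | i); exacts [hc x, ha i]
    simp only [BoundedFormula.realize_bdEqual, Term.realize_var, sumElim_nat]
    constructor
    · intro h; rw [h]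
    · intro h hM; exact h (natInj hv hk _ (hw w₁) _ (hw w₂) hM)
  | @zeroEq n w =>
    intro c a hc ha
    have hw : ∀ w, Sum.elim c a w ≤ k := by
      rintro (x | i); exacts [hc x, ha i]
    simp only [BoundedFormula.realize_bdEqual, Term.realize_var, sumElim_nat, realize_zeroT]
    constructor
    · intro h
      have h0 : (0 : ℕ) = Sum.elim c a w := h
      rw [← h0]
      rfl
    · intro h hM
      have hM0 : natM M 0 = natM M (Sum.elim c a w) := hM
      have := natInj hv hk 0 (Nat.zero_le _) _ (hw w) hM0
      exact h this
  | @succEq n w₁ w₂ =>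
    intro c a hc ha
    have hw : ∀ w, Sum.elim c a w ≤ k := by
      rintro (x | i); exacts [hc x, ha i]
    simp only [BoundedFormula.realize_bdEqual, Term.realize_var, sumElim_nat, realize_succT]
    constructor
    · intro h
      have h' : Sum.elim c a w₁ + 1 = Sum.elim c a w₂ := h
      exact congrArg (natM M) h'
    · intro h hM
      have hM' : natM M (Sum.elim c a w₁ + 1) = natM M (Sum.elim c a w₂) := hM
      have hb : Sum.elim c a w₁ + 1 ≤ k * k + k + 1 := by nlinarith [hw w₁]
      have := natInjBig hv hk _ (hw w₂) _ hb hM'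
      exact h this
  | @addEq n w₁ w₂ w₃ =>
    intro c a hc ha
    have hw : ∀ w, Sum.elim c a w ≤ k := by
      rintro (x | i); exacts [hc x, ha i]
    simp only [BoundedFormula.realize_bdEqual, Term.realize_var, sumElim_nat, realize_addT]
    rw [addNum hv hk _ (hw w₁) _ (hw w₂)]
    constructor
    · intro h
      have h' : Sum.elim c a w₁ + Sum.elim c a w₂ = Sum.elim c a w₃ := h
      exact congrArg (natM M) h'
    · intro h hM
      have hb : Sum.elim c a w₁ + Sum.elim c a w₂ ≤ k * k + k + 1 := by nlinarith [hw w₁, hw w₂]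
      have := natInjBig hv hk _ (hw w₃) _ hb hM
      exact h this
  | @mulEq n w₁ w₂ w₃ =>
    intro c a hc ha
    have hw : ∀ w, Sum.elim c a w ≤ k := by
      rintro (x | i); exacts [hc x, ha i]
    simp only [BoundedFormula.realize_bdEqual, Term.realize_var, sumElim_nat, realize_mulT]
    rw [mulNum hv hk _ (hw w₁) _ (hw w₂)]
    constructor
    · intro h
      have h' : Sum.elim c a w₁ * Sum.elim c a w₂ = Sum.elim c a w₃ := h
      exact congrArg (natM M) h'
    · intro h hM
      have hb : Sum.elim c a w₁ * Sum.elim c a w₂ ≤ k * k + k + 1 := by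
        nlinarith [hw w₁, hw w₂]
      have := natInjBig hv hk _ (hw w₃) _ hb hM
      exact h this
  | @le n w₁ w₂ =>
    intro c a hc ha
    have hw : ∀ w, Sum.elim c a w ≤ k := by
      rintro (x | i); exacts [hc x, ha i]
    simp only [realize_leF, Term.realize_var, sumElim_nat]
    constructor
    · intro h
      have h' : Sum.elim c a w₁ ≤ Sum.elim c a w₂ := h
      exact (leChar hv hk _ (hw w₂) _).mpr ⟨Sum.elim c a w₁, h', rfl⟩
    · intro h hM
      have h' : ¬ (Sum.elim c a w₁ ≤ Sum.elim c a w₂) := h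
      obtain ⟨b, hb, heq⟩ := (leChar hv hk _ (hw w₂) _).mp hM
      have := natInj hv hk _ (hw w₁) b (Nat.le_trans hb (hw w₂)) heq
      omega
  | falsum =>
    intro c a hc ha
    exact ⟨fun h => h, fun _ h => h⟩
  | @imp n φ ψ hφ hψ ihφ ihψ =>
    intro c a hc ha
    obtain ⟨pφ, nφ⟩ := ihφ c a hc ha
    obtain ⟨pψ, nψ⟩ := ihψ c a hc ha
    simp only [BoundedFormula.realize_imp]
    constructor
    · intro h hMφ
      by_cases hN : φ.Realize c a
      · exact pψ (h hN)
      · exact absurd hMφ (nφ hN)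
    · intro h
      rw [Classical.not_imp] at h ⊢
      exact ⟨pφ h.1, nψ h.2⟩
  | @ball n w φ hφ ih =>
    intro c a hc ha
    have hw : Sum.elim c a w ≤ k := by
      cases w with
      | inl x => exact hc x
      | inr i => exact ha i
    simp only [BoundedFormula.realize_all, BoundedFormula.realize_imp, realize_leF,
      Term.realize_var, Sum.elim_inr, Fin.snoc_last, sumElim_snoc_map, sumElim_nat]
    constructor
    · intro h xM hle
      obtain ⟨m, hm, rfl⟩ := (leChar hv hk _ hw xM).mp hle
      have hm' : leM ℕ m (Sum.elim c a w) := hm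
      have hmk : m ≤ k := Nat.le_trans hm hw
      have hres := (ih c (Fin.snoc a m) hc (snoc_le a ha m hmk)).1 (h m hm')
      rw [snoc_nat]
      exact hres
    · intro h hM
      push_neg at h
      obtain ⟨m, hm, hnot⟩ := h
      have hm' : m ≤ Sum.elim c a w := hm
      have hmk : m ≤ k := Nat.le_trans hm' hw
      have hle : leM M (natM M m) (natM M (Sum.elim c a w)) :=
        (leChar hv hk _ hw _).mpr ⟨m, hm', rfl⟩
      have hres := hM (natM M m) hle
      rw [snoc_nat] at hres
      exact (ih c (Fin.snoc a m) hc (snoc_le a ha m hmk)).2 hnot hres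
  | @bex n w φ hφ ih =>
    intro c a hc ha
    have hw : Sum.elim c a w ≤ k := by
      cases w with
      | inl x => exact hc x
      | inr i => exact ha i
    simp only [BoundedFormula.realize_ex, BoundedFormula.realize_inf, realize_leF,
      Term.realize_var, Sum.elim_inr, Fin.snoc_last, sumElim_snoc_map, sumElim_nat]
    constructor
    · intro h
      obtain ⟨m, hm, hφm⟩ := h
      have hm' : m ≤ Sum.elim c a w := hm
      have hmk : m ≤ k := Nat.le_trans hm' hw
      refine ⟨natM M m, (leChar hv hk _ hw _).mpr ⟨m, hm', rfl⟩, ?_⟩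
      rw [snoc_nat]
      exact (ih c (Fin.snoc a m) hc (snoc_le a ha m hmk)).1 hφm
    · intro h hM
      obtain ⟨xM, hle, hφM⟩ := hM
      obtain ⟨m, hm, rfl⟩ := (leChar hv hk _ hw xM).mp hle
      have hm' : leM ℕ m (Sum.elim c a w) := hm
      have hmk : m ≤ k := Nat.le_trans hm hw
      rw [snoc_nat] at hφM
      have hnot : ¬ φ.Realize c (Fin.snoc a m) := fun hr => h ⟨m, hm', hr⟩
      exact (ih c (Fin.snoc a m) hc (snoc_le a ha m hmk)).2 hnot hφM

end Main

/-- absoluteness of pure Δ₀-formulas at numerals below `k`, between ℕ and a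
structure `M` with a certified element `v` distinct from all numerals below `k`. -/
theorem statement8 (M : Type) [La.Structure M] (v : M) (hv : Certified M v)
    (k : ℕ) (hk : ∀ m : ℕ, m < k → natM M m ≠ v) :
    ∀ (n : ℕ) (φ : La.BoundedFormula Empty n), IsPureDelta0 φ →
      ∀ a : Fin n → ℕ, (∀ i, a i ≤ k) →
        (φ.Realize (M := ℕ) Empty.elim a →
          φ.Realize (M := M) Empty.elim (fun i => natM M (a i))) ∧
        (¬ φ.Realize (M := ℕ) Empty.elim a →
          ¬ φ.Realize (M := M) Empty.elim (fun i => natM M (a i))) := by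
  intro n φ hφ a ha
  have h := pure_absolute hv hk φ hφ Empty.elim a (fun x => x.elim) ha
  have he : (fun x : Empty => natM M (Empty.elim x)) = (Empty.elim : Empty → M) :=
    funext fun x => x.elim
  rw [he] at h
  exact h
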